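/- arXiv:1404.5079 — 3 statements merged into one kernel-verified Lean document; each statement's English description precedes it below -/
import Mathlib

section
/- In the comparability graph G on P(n) (distinct A, B adjacent iff one contains the other), every vertex A lying outside the t middle layers (i.e., with ||A| - floor(n/2)| > some bound placing A outside layers floor(n/2) - floor(t/2) + 1, ..., floor(n/2) + ceil(t/2)) has at least C(ceil(n/2), t) neighbours inside those t middle layers. -/
/-- comparability graph on the power set of `[n]`. -/
def compGraph (n : ℕ) : SimpleGraph (Finset (Fin n)) where
  Adj A B := A ≠ B ∧ (A ⊆ B ∨ B ⊆ A)
  symm := ⟨fun A B h => ⟨h.1.symm, h.2.symm⟩⟩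
  loopless := ⟨fun A h => h.1 rfl⟩

instance (n : ℕ) : DecidableRel (compGraph n).Adj := fun A B =>
  inferInstanceAs (Decidable (A ≠ B ∧ (A ⊆ B ∨ B ⊆ A)))

/-- The sizes of the `t` middle layers of the cube (the first `t` layer sizes
in the centrality order `⌊n/2⌋, ⌊n/2⌋+1, ⌊n/2⌋-1, ⌊n/2⌋+2, …`). -/
def middleSizes (n t : ℕ) : Finset ℕ :=
  Finset.Icc (n / 2 - (t - 1) / 2) (n / 2 + t / 2)

/-! It suffices to count the neighbours of `A` in a single middle layer. If `k = #A` lies above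
the middle layers, take the lowest middle size `lo`: `A` has `C(k, lo)` subsets of that size. If
`k` lies below, take the highest middle size `hi`: `A` has `C(n - k, n - hi)` supersets of that
size, the complements of the `(n - hi)`-subsets of `Aᶜ`. The `t` middle sizes are consecutive, so
in both cases the top argument exceeds the bottom one `b` by at least `t`, and
`C(b + t, b) = C(b + t, t) ≥ C(⌈n/2⌉, t)` because `⌈n/2⌉ ≤ b + t`. -/

open Finset

namespace compGraph

variable {n : ℕ} (A : Finset (Fin n)) {s : Finset ℕ} {j : ℕ}

theorem choose_le_card_neighbours_of_lt (hj : j < #A) (hjs : j ∈ s) :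
    (#A).choose j ≤ #{B | (compGraph n).Adj A B ∧ #B ∈ s} := by
  rw [← card_powersetCard]
  refine card_le_card fun B hB => ?_
  obtain ⟨hBA, hBj⟩ := mem_powersetCard.mp hB
  simp only [mem_filter, mem_univ, true_and]
  exact ⟨⟨fun h => by subst h; omega, Or.inr hBA⟩, hBj ▸ hjs⟩

theorem choose_le_card_neighbours_of_gt (hj : #A < j) (hjn : j ≤ n) (hjs : j ∈ s) :
    (n - #A).choose (n - j) ≤ #{B | (compGraph n).Adj A B ∧ #B ∈ s} := by
  have hcompl : #Aᶜ = n - #A := by rw [card_compl, Fintype.card_fin]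
  rw [← hcompl, ← card_powersetCard, ← card_map ⟨compl, compl_injective⟩]
  refine card_le_card fun B hB => ?_
  obtain ⟨C, hC, rfl⟩ := mem_map.mp hB
  obtain ⟨hCA, hCj⟩ := mem_powersetCard.mp hC
  have hcard : #Cᶜ = j := by rw [card_compl, Fintype.card_fin, hCj]; omega
  simp only [Function.Embedding.coeFn_mk, mem_filter, mem_univ, true_and]
  exact ⟨⟨fun h => by subst h; omega, Or.inl (subset_compl_comm.mp hCA)⟩, hcard ▸ hjs⟩

end compGraph

theorem Nat.choose_le_choose_of_add_le {a b c t : ℕ} (hab : a ≤ b + t) (hbc : b + t ≤ c) :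
    a.choose t ≤ c.choose b :=
  calc a.choose t ≤ (b + t).choose t := Nat.choose_le_choose t hab
    _ = (b + t).choose b := Nat.choose_symm_add.symm
    _ ≤ c.choose b := Nat.choose_le_choose b hbc

/-- Every vertex of the comparability graph lying outside the `t` middle layers
has at least `C(⌈n/2⌉, t)` neighbours inside the `t` middle layers. -/
theorem neighbours_in_middle_layers (t : ℕ) (ht : 1 ≤ t) :
    ∃ n₀ : ℕ, ∀ n ≥ n₀, ∀ A : Finset (Fin n), A.card ∉ middleSizes n t →
      Nat.choose ((n + 1) / 2) t ≤
        (Finset.univ.filter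
          (fun B : Finset (Fin n) =>
            (compGraph n).Adj A B ∧ B.card ∈ middleSizes n t)).card := by
  -- `n ≥ t` keeps `n / 2 - (t - 1) / 2` from truncating, so the middle sizes are exactly `t`.
  refine ⟨t, fun n hn A hA => ?_⟩
  set lo := n / 2 - (t - 1) / 2
  set hi := n / 2 + t / 2
  have hAn : #A ≤ n := card_le_univ A |>.trans_eq (Fintype.card_fin n)
  have hlo : lo ∈ middleSizes n t := mem_Icc.mpr ⟨le_rfl, by omega⟩
  have hhi : hi ∈ middleSizes n t := mem_Icc.mpr ⟨by omega, le_rfl⟩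
  simp only [middleSizes, mem_Icc] at hA
  by_cases hbelow : #A < lo
  · calc ((n + 1) / 2).choose t ≤ (n - #A).choose (n - hi) :=
          Nat.choose_le_choose_of_add_le (by omega) (by omega)
      _ ≤ _ := compGraph.choose_le_card_neighbours_of_gt A (by omega) (by omega) hhi
  · calc ((n + 1) / 2).choose t ≤ (#A).choose lo :=
          Nat.choose_le_choose_of_add_le (by omega) (by omega)
      _ ≤ _ := compGraph.choose_le_card_neighbours_of_lt A (by omega) hlo
end

section
/- For every δ > 0 and constant c > 0, if a ≤ 2^n/n^{t+0.9} and p ≥ c/n^t, then for all sufficiently large n, C(2^n, a) · p^a ≤ exp(δ·p·m) where m = C(n, floor(n/2)). -/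
/-!
For every `R > 0`, `C(N, a) p^a = C(N, a) (p/R)^a R^a ≤ exp (N p / R) R^a`, because
`C(N, a) x^a ≤ (N x)^a / a! ≤ exp (N x)`. Take `N = 2^n` and `R = 8 √n / δ`. Since
`2^n ≤ 4 √n C(n, ⌊n/2⌋)`, the first factor is at most `exp (δ p m / 2)`. For the second,
`a log R ≤ 2^n n^(-t-0.9) O(log n)` and `δ p m ≥ δ c 2^n n^(-t-1/2) / 4`; the gap `n^0.4`
between these exponents beats `log n`, so `R^a ≤ exp (δ p m / 2)` for large `n`.
-/

open Real Filter Asymptotics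

theorem choose_mul_pow_le_exp (N a : ℕ) {θ : ℝ} (hθ : 0 ≤ θ) :
    (N.choose a : ℝ) * θ ^ a ≤ exp (N * θ) :=
  calc (N.choose a : ℝ) * θ ^ a ≤ (N : ℝ) ^ a / a.factorial * θ ^ a := by
        gcongr; exact Nat.choose_le_pow_div a N
    _ = (N * θ) ^ a / a.factorial := by rw [mul_pow]; ring
    _ ≤ exp (N * θ) := pow_div_factorial_le_exp _ (by positivity) a

theorem choose_mul_pow_le_exp_add (N a : ℕ) {p R : ℝ} (hp : 0 ≤ p) (hR : 0 < R) :
    (N.choose a : ℝ) * p ^ a ≤ exp (N * p / R + a * log R) :=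
  calc (N.choose a : ℝ) * p ^ a = N.choose a * (p / R) ^ a * R ^ a := by
        rw [mul_assoc, ← mul_pow, div_mul_cancel₀ p hR.ne']
    _ ≤ exp (N * (p / R)) * exp (a * log R) := by
        rw [exp_nat_mul (log R) a, exp_log hR]
        gcongr
        exact choose_mul_pow_le_exp _ _ (by positivity)
    _ = exp (N * p / R + a * log R) := by rw [← exp_add, mul_div_assoc]

theorem sixteen_pow_le_centralBinom_sq (k : ℕ) :
    16 ^ k ≤ (4 * k + 1) * k.centralBinom ^ 2 := by
  induction k with
  | zero => simp
  | succ k ih =>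
    refine Nat.le_of_mul_le_mul_left ?_ (show 0 < (k + 1) ^ 2 by positivity)
    calc (k + 1) ^ 2 * 16 ^ (k + 1) = 16 * (k + 1) ^ 2 * 16 ^ k := by ring
      _ ≤ 16 * (k + 1) ^ 2 * ((4 * k + 1) * k.centralBinom ^ 2) := by gcongr
      _ ≤ (4 * (k + 1) + 1) * (2 * (2 * k + 1)) ^ 2 * k.centralBinom ^ 2 := by
          -- the two polynomial coefficients differ by exactly `4`
          nlinarith [Nat.zero_le (k.centralBinom ^ 2)]
      _ = (k + 1) ^ 2 * ((4 * (k + 1) + 1) * (k + 1).centralBinom ^ 2) := by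
          rw [mul_assoc, ← mul_pow, ← Nat.succ_mul_centralBinom_succ]; ring

theorem four_pow_le_mul_choose_half_sq {n : ℕ} (hn : n ≠ 0) :
    4 ^ n ≤ 16 * n * n.choose (n / 2) ^ 2 := by
  have hcentral : (n / 2).centralBinom ≤ n.choose (n / 2) := by
    rw [Nat.centralBinom_eq_two_mul_choose]
    exact Nat.choose_le_choose _ (Nat.mul_div_le n 2)
  calc 4 ^ n ≤ 4 ^ (2 * (n / 2) + 1) := Nat.pow_le_pow_right (by norm_num) (by omega)
    _ = 4 * 16 ^ (n / 2) := by rw [pow_succ, pow_mul]; ring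
    _ ≤ 4 * ((4 * (n / 2) + 1) * (n / 2).centralBinom ^ 2) := by
        gcongr; exact sixteen_pow_le_centralBinom_sq _
    _ ≤ 4 * (4 * n * n.choose (n / 2) ^ 2) := by gcongr; omega
    _ = 16 * n * n.choose (n / 2) ^ 2 := by ring

theorem two_pow_le_four_mul_sqrt_mul_choose_half {n : ℕ} (hn : n ≠ 0) :
    (2 : ℝ) ^ n ≤ 4 * √n * n.choose (n / 2) := by
  rw [← pow_le_pow_iff_left₀ (by positivity) (by positivity) two_ne_zero, mul_pow, mul_pow,
    Real.sq_sqrt n.cast_nonneg, ← pow_mul, mul_comm n 2, pow_mul]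
  exact_mod_cast four_pow_le_mul_choose_half_sq hn

theorem isLittleO_log_mul_sqrt_rpow {b r : ℝ} (hb : 0 < b) (hr : 0 < r) :
    (fun x => log (b * √x)) =o[atTop] fun x => x ^ r := by
  have hsplit : (fun x => log b + 1 / 2 * log x) =ᶠ[atTop] fun x => log (b * √x) := by
    filter_upwards [eventually_gt_atTop 0] with x hx
    rw [log_mul hb.ne' (sqrt_pos.2 hx).ne', log_sqrt hx.le]
    ring
  refine IsLittleO.congr' ?_ hsplit EventuallyEq.rfl
  refine IsLittleO.add ?_ ((isLittleO_log_rpow_atTop hr).const_mul_left _)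
  exact isLittleO_const_left.2 <| Or.inr <| tendsto_norm_atTop_atTop.comp (tendsto_rpow_atTop hr)

theorem eventually_abs_log_mul_sqrt_le {b r K : ℝ} (hb : 0 < b) (hr : 0 < r) (hK : 0 < K) :
    ∀ᶠ n : ℕ in atTop, |log (b * √n)| ≤ K * (n : ℝ) ^ r := by
  filter_upwards [tendsto_natCast_atTop_atTop.eventually
    ((isLittleO_log_mul_sqrt_rpow hb hr).bound hK)] with n hn
  rwa [norm_of_nonneg (rpow_nonneg n.cast_nonneg _), norm_eq_abs] at hn

theorem choose_two_pow_mul_pow_le_exp {n t a : ℕ} {δ c p : ℝ} (hn : n ≠ 0) (hδ : 0 < δ)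
    (hc : 0 ≤ c) (ha : (a : ℝ) ≤ 2 ^ n / (n : ℝ) ^ ((t : ℝ) + 0.9)) (hpc : c / (n : ℝ) ^ t ≤ p)
    (hlog : |log (8 / δ * √n)| ≤ δ * c / 8 * (n : ℝ) ^ (0.4 : ℝ)) :
    ((2 ^ n).choose a : ℝ) * p ^ a ≤ exp (δ * p * n.choose (n / 2)) := by
  set m : ℝ := (n.choose (n / 2) : ℝ)
  have hn0 : (0 : ℝ) < n := by positivity
  have hp : 0 ≤ p := (by positivity : 0 ≤ c / (n : ℝ) ^ t).trans hpc
  have hm : (2 : ℝ) ^ n / (4 * √n) ≤ m := by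
    rw [div_le_iff₀ (by positivity), mul_comm]
    exact two_pow_le_four_mul_sqrt_mul_choose_half hn
  have hsplit : (n : ℝ) ^ ((t : ℝ) + 0.9) = n ^ t * n ^ (0.4 : ℝ) * √n := by
    rw [sqrt_eq_rpow, mul_assoc, ← rpow_add hn0, rpow_add hn0, rpow_natCast]; norm_num
  have hlinear : ((2 ^ n : ℕ) : ℝ) * p / (8 / δ * √n) ≤ δ * p * m / 2 :=
    calc ((2 ^ n : ℕ) : ℝ) * p / (8 / δ * √n) = δ * p * ((2 : ℝ) ^ n / (4 * √n)) / 2 := by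
          push_cast; field_simp; ring
      _ ≤ δ * p * m / 2 := by gcongr
  have hentropy : a * log (8 / δ * √n) ≤ δ * p * m / 2 :=
    calc a * log (8 / δ * √n) ≤ 2 ^ n / (n : ℝ) ^ ((t : ℝ) + 0.9) * |log (8 / δ * √n)| :=
          (mul_le_mul_of_nonneg_left (le_abs_self _) a.cast_nonneg).trans
            (mul_le_mul_of_nonneg_right ha (abs_nonneg _))
      _ ≤ 2 ^ n / (n : ℝ) ^ ((t : ℝ) + 0.9) * (δ * c / 8 * (n : ℝ) ^ (0.4 : ℝ)) := by gcongr
      _ = δ * (c / (n : ℝ) ^ t) * ((2 : ℝ) ^ n / (4 * √n)) / 2 := by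
          rw [hsplit]; field_simp; ring
      _ ≤ δ * p * m / 2 := by gcongr
  calc ((2 ^ n).choose a : ℝ) * p ^ a
      ≤ exp ((2 ^ n : ℕ) * p / (8 / δ * √n) + a * log (8 / δ * √n)) :=
        choose_mul_pow_le_exp_add _ _ hp (by positivity)
    _ ≤ exp (δ * p * m / 2 + δ * p * m / 2) := by gcongr
    _ = exp (δ * p * m) := by ring_nf

theorem fingerprint_count_S1_general (t : ℕ) (δ c : ℝ)
    (hδ : 0 < δ) (hc : 0 < c) :
    ∃ n₀ : ℕ, ∀ n ≥ n₀, ∀ a : ℕ, ∀ p : ℝ,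
      (a : ℝ) ≤ 2 ^ n / (n : ℝ) ^ ((t : ℝ) + 0.9) →
      c / (n : ℝ) ^ t ≤ p → p ≤ 1 →
      (Nat.choose (2 ^ n) a : ℝ) * p ^ a ≤
        Real.exp (δ * p * (n.choose (n / 2) : ℝ)) := by
  obtain ⟨n₀, hn₀⟩ := eventually_atTop.1 <|
    (eventually_abs_log_mul_sqrt_le (b := 8 / δ) (r := 0.4) (K := δ * c / 8) (by positivity)
      (by norm_num) (by positivity)).and (eventually_gt_atTop 0)
  refine ⟨n₀, fun n hn a p ha hpc _ => ?_⟩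
  obtain ⟨hlog, hn0⟩ := hn₀ n hn
  exact choose_two_pow_mul_pow_le_exp hn0.ne' hδ hc.le ha hpc hlog

/-- First counting estimate in the union bound of Theorem 2: for fixed
`t ≥ 1`, every `δ > 0` and `c > 0`, if `a ≤ 2^n / n^(t+0.9)` and
`c/n^t ≤ p ≤ 1`, then for all large `n`,
`C(2^n, a) p^a ≤ exp(δ p m)` where `m = C(n, ⌊n/2⌋)`. -/
theorem fingerprint_count_S1 (t : ℕ) (ht : 1 ≤ t) (δ c : ℝ)
    (hδ : 0 < δ) (hc : 0 < c) :
    ∃ n₀ : ℕ, ∀ n ≥ n₀, ∀ a : ℕ, ∀ p : ℝ,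
      (a : ℝ) ≤ 2 ^ n / (n : ℝ) ^ ((t : ℝ) + 0.9) →
      c / (n : ℝ) ^ t ≤ p → p ≤ 1 →
      (Nat.choose (2 ^ n) a : ℝ) * p ^ a ≤
        Real.exp (δ * p * (n.choose (n / 2) : ℝ)) :=
  fingerprint_count_S1_general t δ c hδ hc
end

section
/- For every ε > 0 and t ∈ ℕ there exists C such that if p ≥ C/n^t, b ≤ (t+2)m/((ε/4)²n^t), and m = C(n, floor(n/2)), then for all large n, C((t+2)m, b)·p^b ≤ exp(ε²pmt/400). -/
lemma pow_div_factorial_le_exp' (x : ℝ) (hx : 0 ≤ x) (b : ℕ) :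
    x ^ b / (Nat.factorial b : ℝ) ≤ Real.exp x := by
  calc x ^ b / (Nat.factorial b : ℝ)
      ≤ ∑ i ∈ Finset.range (b + 1), x ^ i / (Nat.factorial i : ℝ) := by
        apply Finset.single_le_sum (f := fun i => x ^ i / (Nat.factorial i : ℝ))
        · intro i _
          positivity
        · simp
    _ ≤ Real.exp x := Real.sum_le_exp_of_nonneg hx _

/-- Second counting estimate in the union bound of Theorem 2: for every
`ε > 0` and `t ≥ 1` there is a constant `C` such that if `C/n^t ≤ p ≤ 1` and
`b ≤ (t+2)m / ((ε/4)² n^t)` (with `m = C(n, ⌊n/2⌋)`), then for all large `n`,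
`C((t+2)m, b) p^b ≤ exp(ε² p m t / 400)`. -/
theorem fingerprint_count_S2 (ε : ℝ) (hε : 0 < ε) (t : ℕ) (ht : 1 ≤ t) :
    ∃ C : ℝ, 0 < C ∧ ∃ n₀ : ℕ, ∀ n ≥ n₀, ∀ p : ℝ, ∀ b : ℕ,
      C / (n : ℝ) ^ t ≤ p → p ≤ 1 →
      (b : ℝ) ≤ ((t : ℝ) + 2) * (n.choose (n / 2) : ℝ) /
        ((ε / 4) ^ 2 * (n : ℝ) ^ t) →
      (Nat.choose ((t + 2) * n.choose (n / 2)) b : ℝ) * p ^ b ≤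
        Real.exp (ε ^ 2 * p * (n.choose (n / 2) : ℝ) * t / 400) := by
  set D : ℝ := max 1 ((3600 / ε ^ 2) ^ 2) with hDdef
  have hD1 : (1 : ℝ) ≤ D := le_max_left _ _
  have hD0 : (0 : ℝ) < D := lt_of_lt_of_le one_pos hD1
  have hsD0 : (0 : ℝ) < Real.sqrt D := Real.sqrt_pos.mpr hD0
  have hsD : 3600 / ε ^ 2 ≤ Real.sqrt D := by
    have h1 : (3600 / ε ^ 2) ^ 2 ≤ D := le_max_right _ _
    have h2 : (0 : ℝ) ≤ 3600 / ε ^ 2 := by positivity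
    exact (Real.le_sqrt h2 hD0.le).mpr h1
  -- (1 + log D) / D ≤ 3 / sqrt D ≤ ε² / 1200
  have hlogD : Real.log D ≤ 2 * (Real.sqrt D - 1) := by
    have := Real.log_le_sub_one_of_pos hsD0
    rw [Real.log_sqrt hD0.le] at this
    linarith
  have hlogD0 : 0 ≤ Real.log D := Real.log_nonneg hD1
  have hkey : (1 + Real.log D) / D ≤ ε ^ 2 / 1200 := by
    have h1 : 1 + Real.log D ≤ 3 * Real.sqrt D := by
      have : (1:ℝ) ≤ Real.sqrt D := by
        rw [show (1:ℝ) = Real.sqrt 1 by simp]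
        exact Real.sqrt_le_sqrt hD1
      nlinarith
    have hDsq : Real.sqrt D * Real.sqrt D = D := Real.mul_self_sqrt hD0.le
    have h2 : (1 + Real.log D) / D ≤ 3 / Real.sqrt D := by
      rw [div_le_div_iff₀ hD0 hsD0]
      nlinarith
    have h3 : 3 / Real.sqrt D ≤ ε ^ 2 / 1200 := by
      rw [div_le_div_iff₀ hsD0 (by norm_num : (0:ℝ) < 1200)]
      have := mul_le_mul_of_nonneg_left hsD (le_of_lt (by positivity : (0:ℝ) < ε ^ 2))
      rw [mul_div_cancel₀] at this
      · linarith
      · positivity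
    linarith
  refine ⟨16 * D / ε ^ 2, by positivity, 1, fun n hn p b hp hp1 hb => ?_⟩
  have hn1 : (1 : ℝ) ≤ (n : ℝ) := by exact_mod_cast hn
  have hnt : (0 : ℝ) < (n : ℝ) ^ t := by positivity
  have hp0 : 0 < p := lt_of_lt_of_le (by positivity) hp
  set m : ℕ := n.choose (n / 2) with hm
  have hm1 : (1 : ℝ) ≤ (m : ℝ) := by
    have : 1 ≤ m := Nat.choose_pos (Nat.div_le_self n 2)
    exact_mod_cast this
  have ht1 : (1 : ℝ) ≤ (t : ℝ) := by exact_mod_cast ht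
  set N : ℕ := (t + 2) * m with hN
  have hNr : (N : ℝ) = ((t : ℝ) + 2) * m := by push_cast [hN]; ring
  have hN0 : (0 : ℝ) < (N : ℝ) := by rw [hNr]; nlinarith
  -- the target exponent argument is nonneg
  have hRHSnn : 0 ≤ ε ^ 2 * p * (m : ℝ) * t / 400 := by positivity
  rcases Nat.eq_zero_or_pos b with hb0 | hbpos
  · subst hb0
    simp only [Nat.choose_zero_right, Nat.cast_one, pow_zero, mul_one]
    exact Real.one_le_exp hRHSnn
  -- main case b ≥ 1
  have hbr : (1 : ℝ) ≤ (b : ℝ) := by exact_mod_cast hbpos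
  have hbr0 : (0 : ℝ) < (b : ℝ) := by linarith
  -- b ≤ N p / D
  have hpn : 16 * D / ε ^ 2 ≤ p * (n : ℝ) ^ t := by
    rw [div_le_iff₀ hnt] at hp; linarith [hp]
  have hbND : (b : ℝ) ≤ (N : ℝ) * p / D := by
    have hδ : (ε / 4) ^ 2 = ε ^ 2 / 16 := by ring
    have hb' : (b : ℝ) * ((ε / 4) ^ 2 * (n : ℝ) ^ t) ≤ ((t : ℝ) + 2) * m := by
      rw [le_div_iff₀ (by positivity)] at hb
      linarith [hb]
    rw [le_div_iff₀ hD0]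
    -- b * D ≤ N * p : use  b * (ε²/16 * n^t) ≤ N and  16 D / ε² ≤ p n^t
    have h1 : (b : ℝ) * (ε ^ 2 / 16 * (n : ℝ) ^ t) ≤ (N : ℝ) := by
      rw [hNr]; rw [hδ] at hb'; linarith
    have h2 : (b : ℝ) * D ≤ (b : ℝ) * (ε ^ 2 / 16 * (n : ℝ) ^ t) * p := by
      have h3 : D ≤ ε ^ 2 / 16 * (p * (n:ℝ)^t) := by
        have := mul_le_mul_of_nonneg_left hpn (le_of_lt (by positivity : (0:ℝ) < ε ^ 2 / 16))
        calc D = ε ^ 2 / 16 * (16 * D / ε ^ 2) := by field_simp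
          _ ≤ _ := this
      calc (b : ℝ) * D ≤ (b : ℝ) * (ε ^ 2 / 16 * (p * (n:ℝ)^t)) :=
            mul_le_mul_of_nonneg_left h3 hbr0.le
        _ = (b : ℝ) * (ε ^ 2 / 16 * (n : ℝ) ^ t) * p := by ring
    calc (b : ℝ) * D ≤ (b : ℝ) * (ε ^ 2 / 16 * (n : ℝ) ^ t) * p := h2
      _ ≤ (N : ℝ) * p := mul_le_mul_of_nonneg_right h1 hp0.le
  -- choose N b * p^b ≤ (e N p / b)^b
  set A : ℝ := (N : ℝ) * p with hA
  have hA0 : 0 < A := mul_pos hN0 hp0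
  have hchoose : (Nat.choose N b : ℝ) * p ^ b ≤ (Real.exp 1 * A / b) ^ b := by
    have h1 : (Nat.choose N b : ℝ) ≤ (N : ℝ) ^ b / (Nat.factorial b : ℝ) :=
      Nat.choose_le_pow_div b N
    have h2 : (Nat.choose N b : ℝ) * p ^ b ≤ A ^ b / (Nat.factorial b : ℝ) := by
      have := mul_le_mul_of_nonneg_right h1 (le_of_lt (pow_pos hp0 b))
      calc (Nat.choose N b : ℝ) * p ^ b ≤ (N : ℝ) ^ b / (Nat.factorial b : ℝ) * p ^ b := this
        _ = A ^ b / (Nat.factorial b : ℝ) := by rw [hA, mul_pow]; ring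
    have h3 : (b : ℝ) ^ b / (Nat.factorial b : ℝ) ≤ Real.exp (b : ℝ) :=
      pow_div_factorial_le_exp' (b : ℝ) (by positivity) b
    -- 1 / b! ≤ exp b / b^b
    have hbb : (0:ℝ) < (b:ℝ) ^ b := pow_pos hbr0 b
    have hfac : (0:ℝ) < (Nat.factorial b : ℝ) := by
      exact_mod_cast Nat.factorial_pos b
    have h3' : ((b : ℝ)) ^ b ≤ Real.exp (b : ℝ) * (Nat.factorial b : ℝ) := by
      rw [div_le_iff₀ hfac] at h3; exact h3
    have h4 : A ^ b / (Nat.factorial b : ℝ) ≤ A ^ b * Real.exp (b : ℝ) / (b : ℝ) ^ b := by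
      rw [div_le_div_iff₀ hfac hbb]
      calc A ^ b * (b:ℝ) ^ b ≤ A ^ b * (Real.exp (b:ℝ) * (Nat.factorial b : ℝ)) :=
            mul_le_mul_of_nonneg_left h3' (pow_nonneg hA0.le b)
        _ = A ^ b * Real.exp (b:ℝ) * (Nat.factorial b : ℝ) := by ring
    have hexp : Real.exp 1 ^ b = Real.exp (b : ℝ) := by
      rw [← Real.exp_nat_mul, mul_one]
    have h5 : A ^ b * Real.exp (b : ℝ) / (b : ℝ) ^ b = (Real.exp 1 * A / b) ^ b := by
      rw [div_pow, mul_pow (Real.exp 1) A, hexp]; ring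
    calc (Nat.choose N b : ℝ) * p ^ b ≤ A ^ b / (Nat.factorial b : ℝ) := h2
      _ ≤ A ^ b * Real.exp (b : ℝ) / (b : ℝ) ^ b := h4
      _ = (Real.exp 1 * A / b) ^ b := h5
  -- rewrite RHS power as exp and bound the exponent
  have hbase : 0 < Real.exp 1 * A / b := by positivity
  have hpow : (Real.exp 1 * A / b) ^ b = Real.exp ((b : ℝ) * Real.log (Real.exp 1 * A / b)) := by
    rw [Real.exp_nat_mul, Real.exp_log hbase]
  have hlogbound : (b : ℝ) * Real.log (Real.exp 1 * A / b) ≤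
      ε ^ 2 * p * (m : ℝ) * t / 400 := by
    have hAb : 0 < A / b := by positivity
    have hsplit : Real.log (Real.exp 1 * A / b) = 1 + Real.log (A / b) := by
      rw [mul_div_assoc, Real.log_mul (Real.exp_ne_zero 1) (ne_of_gt hAb), Real.log_exp]
    have hlog2 : Real.log (A / b) ≤ A / ((b : ℝ) * D) + Real.log D - 1 := by
      have h := Real.log_le_sub_one_of_pos (show 0 < A / b / D by positivity)
      rw [Real.log_div (ne_of_gt hAb) (ne_of_gt hD0)] at h
      have : A / b / D = A / ((b:ℝ) * D) := by rw [div_div]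
      rw [this] at h
      linarith
    have step1 : (b : ℝ) * Real.log (Real.exp 1 * A / b) ≤ A / D + (b : ℝ) * Real.log D := by
      have this1 := mul_le_mul_of_nonneg_left hlog2 hbr0.le
      have hbne : (b : ℝ) ≠ 0 := ne_of_gt hbr0
      have hDne : D ≠ 0 := ne_of_gt hD0
      have h6 : (b : ℝ) * (A / ((b : ℝ) * D) + Real.log D - 1)
          = A / D + (b : ℝ) * Real.log D - (b : ℝ) := by
        field_simp
      rw [h6] at this1
      rw [hsplit, mul_add, mul_one]
      linarith
    have step2 : (b : ℝ) * Real.log D ≤ (A / D) * Real.log D :=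
      mul_le_mul_of_nonneg_right hbND hlogD0
    have step3 : A / D + (A / D) * Real.log D = (A / D) * (1 + Real.log D) := by ring
    have step4 : (A / D) * (1 + Real.log D) ≤ A * (ε ^ 2 / 1200) := by
      have : (A / D) * (1 + Real.log D) = A * ((1 + Real.log D) / D) := by ring
      rw [this]
      exact mul_le_mul_of_nonneg_left hkey hA0.le
    have step5 : A * (ε ^ 2 / 1200) ≤ ε ^ 2 * p * (m : ℝ) * t / 400 := by
      have h32 : (t : ℝ) + 2 ≤ 3 * t := by linarith
      have hpm : (0:ℝ) ≤ p * (m : ℝ) * (ε ^ 2 / 1200) := by positivity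
      calc A * (ε ^ 2 / 1200) = ((t:ℝ) + 2) * (p * (m:ℝ) * (ε ^ 2 / 1200)) := by
            rw [hA, hNr]; ring
        _ ≤ 3 * (t:ℝ) * (p * (m:ℝ) * (ε ^ 2 / 1200)) :=
            mul_le_mul_of_nonneg_right h32 hpm
        _ = ε ^ 2 * p * (m : ℝ) * t / 400 := by ring
    linarith
  calc (Nat.choose N b : ℝ) * p ^ b ≤ (Real.exp 1 * A / b) ^ b := hchoose
    _ = Real.exp ((b : ℝ) * Real.log (Real.exp 1 * A / b)) := hpow
    _ ≤ Real.exp (ε ^ 2 * p * (m : ℝ) * t / 400) := Real.exp_le_exp.mpr hlogbound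
end
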